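/- Let n ≥ 2, s ∈ (0,1), let Ω ⊆ ℝ^{n+1} be a bounded open set, and let E be an s-minimal set in Ω with Per_s(E,Ω) < +∞. Then for every measurable set A ⊆ E ∩ Ω one has L_s(A, E^c) ≤ L_s(A, E \ A); equivalently, Per_s(E,Ω) − Per_s(E \ A, Ω) = L_s(A, E^c) − L_s(A, E \ A) ≤ 0. -/

import Mathlib

open MeasureTheory Filter Set Topology

noncomputable section

/-- The interaction functional `L_s(A,B)` in `ℝ^{n+1}`. -/
def Ls (n : ℕ) (s : ℝ) (A B : Set (EuclideanSpace ℝ (Fin (n + 1)))) : ENNReal :=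
  ∫⁻ X in A, ∫⁻ Y in B, ENNReal.ofReal (1 / ‖X - Y‖ ^ ((n : ℝ) + 1 + s))

/-- The fractional `s`-perimeter of `E` in the open set `O`. -/
def sPer (n : ℕ) (s : ℝ) (E O : Set (EuclideanSpace ℝ (Fin (n + 1)))) : ENNReal :=
  Ls n s (E ∩ O) (Eᶜ ∩ O) + Ls n s (E ∩ O) (Eᶜ ∩ Oᶜ) + Ls n s (E ∩ Oᶜ) (Eᶜ ∩ O)

/-- `E` is an `s`-minimal set in the bounded open set `O`. -/
def IsMinimizerIn (n : ℕ) (s : ℝ) (E O : Set (EuclideanSpace ℝ (Fin (n + 1)))) : Prop :=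
  sPer n s E O < ⊤ ∧
    ∀ F : Set (EuclideanSpace ℝ (Fin (n + 1))), F \ O = E \ O → sPer n s E O ≤ sPer n s F O

lemma Ls_ker_meas (n : ℕ) (s : ℝ) :
    Measurable (fun p : (EuclideanSpace ℝ (Fin (n + 1))) × (EuclideanSpace ℝ (Fin (n + 1))) =>
      ENNReal.ofReal (1 / ‖p.1 - p.2‖ ^ ((n : ℝ) + 1 + s))) := by
  fun_prop

/-- `Ls` is additive in the left argument over disjoint sets. -/
lemma Ls_union_left (n : ℕ) (s : ℝ) {A₁ A₂ B : Set (EuclideanSpace ℝ (Fin (n + 1)))}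
    (h₂ : MeasurableSet A₂) (hd : Disjoint A₁ A₂) :
    Ls n s (A₁ ∪ A₂) B = Ls n s A₁ B + Ls n s A₂ B :=
  lintegral_union h₂ hd

/-- `Ls` is additive in the right argument over disjoint sets. -/
lemma Ls_union_right (n : ℕ) (s : ℝ) {A B₁ B₂ : Set (EuclideanSpace ℝ (Fin (n + 1)))}
    (h₂ : MeasurableSet B₂) (hd : Disjoint B₁ B₂) :
    Ls n s A (B₁ ∪ B₂) = Ls n s A B₁ + Ls n s A B₂ := by
  unfold Ls
  have h : ∀ X : EuclideanSpace ℝ (Fin (n + 1)),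
      (∫⁻ Y in B₁ ∪ B₂, ENNReal.ofReal (1 / ‖X - Y‖ ^ ((n : ℝ) + 1 + s)))
        = (∫⁻ Y in B₁, ENNReal.ofReal (1 / ‖X - Y‖ ^ ((n : ℝ) + 1 + s)))
          + ∫⁻ Y in B₂, ENNReal.ofReal (1 / ‖X - Y‖ ^ ((n : ℝ) + 1 + s)) := fun X =>
    lintegral_union h₂ hd
  rw [lintegral_congr h]
  exact lintegral_add_left ((Ls_ker_meas n s).lintegral_prod_right') _

/-- `Ls` is symmetric. -/
lemma Ls_symm (n : ℕ) (s : ℝ) (A B : Set (EuclideanSpace ℝ (Fin (n + 1)))) :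
    Ls n s A B = Ls n s B A := by
  unfold Ls
  rw [lintegral_lintegral_swap ((Ls_ker_meas n s).aemeasurable)]
  refine lintegral_congr fun Y => lintegral_congr fun X => ?_
  rw [norm_sub_rev]

/-- **Minimality tested by inner deletions** (from the proof of Lemma 2.1 in the paper).
If `E` is `s`-minimal in the bounded open set `Ω` and `A ⊆ E ∩ Ω`, then
`L_s(A, Eᶜ) ≤ L_s(A, E \ A)`; equivalently (in additive, extended-real form),
`Per_s(E,Ω) − Per_s(E \ A,Ω) = L_s(A, Eᶜ) − L_s(A, E \ A) ≤ 0`, i.e.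
`Per_s(E \ A, Ω) + L_s(A, Eᶜ) = Per_s(E, Ω) + L_s(A, E \ A)`. -/
theorem perimeter_variation_by_deletion
    (n : ℕ) (hn : 2 ≤ n) (s : ℝ) (hs : s ∈ Set.Ioo (0 : ℝ) 1)
    (Ω : Set (EuclideanSpace ℝ (Fin (n + 1)))) (hΩo : IsOpen Ω)
    (hΩb : Bornology.IsBounded Ω)
    (E : Set (EuclideanSpace ℝ (Fin (n + 1)))) (hEm : MeasurableSet E)
    (hmin : IsMinimizerIn n s E Ω) (hfin : sPer n s E Ω < ⊤)
    (A : Set (EuclideanSpace ℝ (Fin (n + 1)))) (hAm : MeasurableSet A)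
    (hA : A ⊆ E ∩ Ω) :
    Ls n s A Eᶜ ≤ Ls n s A (E \ A) ∧
      sPer n s (E \ A) Ω + Ls n s A Eᶜ = sPer n s E Ω + Ls n s A (E \ A) := by
  have hAΩ : A ⊆ Ω := fun x hx => (hA hx).2
  have hAE : A ⊆ E := fun x hx => (hA hx).1
  set B : Set (EuclideanSpace ℝ (Fin (n + 1))) := (E ∩ Ω) \ A with hBdef
  set C : Set (EuclideanSpace ℝ (Fin (n + 1))) := E ∩ Ωᶜ with hCdef
  have hBm : MeasurableSet B := (hEm.inter hΩo.measurableSet).diff hAm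
  have hCm : MeasurableSet C := hEm.inter hΩo.measurableSet.compl
  -- set identities
  have hEΩ : E ∩ Ω = A ∪ B := (union_diff_cancel hA).symm
  have hFΩ : (E \ A) ∩ Ω = B := by
    ext x; simp [hBdef, and_comm, and_assoc, and_left_comm]
  have hFΩc : (E \ A) ∩ Ωᶜ = C := by
    ext x
    simp only [hCdef, mem_inter_iff, mem_diff, mem_compl_iff]
    exact ⟨fun h => ⟨h.1.1, h.2⟩, fun h => ⟨⟨h.1, fun hxA => h.2 (hAΩ hxA)⟩, h.2⟩⟩
  have hFcΩ : (E \ A)ᶜ ∩ Ω = (Eᶜ ∩ Ω) ∪ A := by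
    ext x
    simp only [mem_inter_iff, mem_compl_iff, mem_diff, mem_union, not_and, not_not]
    constructor
    · rintro ⟨h, hΩx⟩
      by_cases hxE : x ∈ E
      · exact Or.inr (h hxE)
      · exact Or.inl ⟨hxE, hΩx⟩
    · rintro (⟨hxE, hΩx⟩ | hxA)
      · exact ⟨fun h => absurd h hxE, hΩx⟩
      · exact ⟨fun _ => hxA, hAΩ hxA⟩
  have hFcΩc : (E \ A)ᶜ ∩ Ωᶜ = Eᶜ ∩ Ωᶜ := by
    ext x
    simp only [mem_inter_iff, mem_compl_iff, mem_diff, not_and, not_not]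
    constructor
    · rintro ⟨h, hΩx⟩
      exact ⟨fun hxE => absurd (hAΩ (h hxE)) hΩx, hΩx⟩
    · rintro ⟨hxE, hΩx⟩
      exact ⟨fun h => absurd h hxE, hΩx⟩
  have hEc : Eᶜ = (Eᶜ ∩ Ω) ∪ (Eᶜ ∩ Ωᶜ) := by
    rw [← inter_union_distrib_left, union_compl_self, inter_univ]
  have hEA : E \ A = B ∪ C := by
    ext x
    simp only [hBdef, hCdef, mem_diff, mem_union, mem_inter_iff, mem_compl_iff]
    constructor
    · rintro ⟨hxE, hxA⟩
      by_cases hΩx : x ∈ Ω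
      · exact Or.inl ⟨⟨hxE, hΩx⟩, hxA⟩
      · exact Or.inr ⟨hxE, hΩx⟩
    · rintro (⟨⟨hxE, _⟩, hxA⟩ | ⟨hxE, hΩx⟩)
      · exact ⟨hxE, hxA⟩
      · exact ⟨hxE, fun hxA => hΩx (hAΩ hxA)⟩
  -- disjointness facts
  have hdAB : Disjoint A B := disjoint_sdiff_self_right
  have hdBC : Disjoint B C :=
    Disjoint.mono (fun x hx => hx.1.2) (fun x hx => hx.2) disjoint_compl_right
  have hdEcAright : ∀ S : Set (EuclideanSpace ℝ (Fin (n + 1))), S ⊆ Eᶜ → Disjoint S A :=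
    fun S hS => Disjoint.mono hS hAE disjoint_compl_left
  have hdΩ : Disjoint (Eᶜ ∩ Ω) (Eᶜ ∩ Ωᶜ) :=
    Disjoint.mono (fun x hx => hx.2) (fun x hx => hx.2) disjoint_compl_right
  -- measurability
  have hEcΩm : MeasurableSet (Eᶜ ∩ Ωᶜ) := hEm.compl.inter hΩo.measurableSet.compl
  -- decomposition of sPer E Ω
  have hPerE : sPer n s E Ω
      = Ls n s A (Eᶜ ∩ Ω) + Ls n s B (Eᶜ ∩ Ω) + (Ls n s A (Eᶜ ∩ Ωᶜ) + Ls n s B (Eᶜ ∩ Ωᶜ))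
        + Ls n s C (Eᶜ ∩ Ω) := by
    rw [sPer, hEΩ, Ls_union_left n s hBm hdAB, Ls_union_left n s hBm hdAB]
  -- decomposition of sPer (E \ A) Ω
  have hPerF : sPer n s (E \ A) Ω
      = (Ls n s B (Eᶜ ∩ Ω) + Ls n s A B) + Ls n s B (Eᶜ ∩ Ωᶜ)
        + (Ls n s C (Eᶜ ∩ Ω) + Ls n s A C) := by
    rw [sPer, hFΩ, hFΩc, hFcΩ, hFcΩc,
      Ls_union_right n s hAm (hdEcAright _ (inter_subset_left)),
      Ls_union_right n s hAm (hdEcAright _ (inter_subset_left)),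
      Ls_symm n s B A, Ls_symm n s C A]
  have hLsEc : Ls n s A Eᶜ = Ls n s A (Eᶜ ∩ Ω) + Ls n s A (Eᶜ ∩ Ωᶜ) := by
    conv_lhs => rw [hEc]
    exact Ls_union_right n s hEcΩm hdΩ
  have hLsEA : Ls n s A (E \ A) = Ls n s A B + Ls n s A C := by
    rw [hEA]
    exact Ls_union_right n s hCm hdBC
  -- the key identity
  have key : sPer n s (E \ A) Ω + Ls n s A Eᶜ = sPer n s E Ω + Ls n s A (E \ A) := by
    rw [hPerE, hPerF, hLsEc, hLsEA]; ring
  refine ⟨?_, key⟩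
  -- minimality
  have hFeq : (E \ A) \ Ω = E \ Ω := by
    ext x
    simp only [mem_diff]
    exact ⟨fun h => ⟨h.1.1, h.2⟩, fun h => ⟨⟨h.1, fun hxA => h.2 (hAΩ hxA)⟩, h.2⟩⟩
  have hle : sPer n s E Ω ≤ sPer n s (E \ A) Ω := hmin.2 _ hFeq
  by_cases hT : Ls n s A (E \ A) = ⊤
  · simp [hT]
  · have hfin' : sPer n s E Ω + Ls n s A (E \ A) ≠ ⊤ :=
      ENNReal.add_ne_top.mpr ⟨hfin.ne, hT⟩
    have hPle : sPer n s E Ω + Ls n s A Eᶜ ≤ sPer n s E Ω + Ls n s A (E \ A) :=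
      calc sPer n s E Ω + Ls n s A Eᶜ ≤ sPer n s (E \ A) Ω + Ls n s A Eᶜ := by
            exact add_le_add_left hle _
        _ = sPer n s E Ω + Ls n s A (E \ A) := key
    exact (ENNReal.add_le_add_iff_left hfin.ne).mp hPle
  end
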